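/- Let α ∈ (1/2, 1) and 0 < λ < 1/3. Let u ∈ C²([0,1]) with u(0) = u'(0) = 0 and v ∈ C¹([0,1]). Define E = ½∫₀¹ v(x)² dx + ½∫₀¹ u''(x)² dx + ½∫₀¹ v'(x)² dx and ϱ = ∫₀¹ ( v(x)(x u'(x) − α u(x)) + v'(x)((1−α)u'(x) + x u''(x)) ) dx. Then (1 − 3λ) E ≤ E + λϱ ≤ (1 + 3λ) E. -/

import Mathlib

/-!
Since `u 0 = u' 0 = 0`, the fundamental theorem of calculus and Cauchy–Schwarz bound `u²` and
`u'²` pointwise on `[0, 1]` by `∫ u''²`. Young's inequality `a p ≤ (3/2) a² + p² / 6` then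
bounds the integrand of `ϱ` pointwise, and integrating gives
`|ϱ| ≤ (3/2) ∫ v² + (3/2) ∫ v'² + (4/3) ∫ u''² ≤ 3 E`.
-/

open intervalIntegral

theorem sq_integral_le_mul_integral_sq {f : ℝ → ℝ} {a b : ℝ} (hab : a ≤ b)
    (hf : IntervalIntegrable f MeasureTheory.volume a b)
    (hf2 : IntervalIntegrable (fun t => f t ^ 2) MeasureTheory.volume a b) :
    (∫ t in a..b, f t) ^ 2 ≤ (b - a) * ∫ t in a..b, f t ^ 2 := by
  set I := ∫ t in a..b, f t with hI
  have hexpand : ∫ t in a..b, ((b - a) * f t - I) ^ 2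
      = (b - a) * ((b - a) * (∫ t in a..b, f t ^ 2) - I ^ 2) := by
    have h1 := (hf2.const_mul ((b - a) ^ 2)).sub (hf.const_mul (2 * (b - a) * I))
    simp_rw [show ∀ t, ((b - a) * f t - I) ^ 2
      = (b - a) ^ 2 * f t ^ 2 - 2 * (b - a) * I * f t + I ^ 2 from fun t => by ring]
    rw [integral_add h1 intervalIntegrable_const, integral_sub (hf2.const_mul _) (hf.const_mul _),
      integral_const_mul, integral_const_mul, integral_const, smul_eq_mul, ← hI]
    ring
  have hnonneg : 0 ≤ ∫ t in a..b, ((b - a) * f t - I) ^ 2 :=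
    integral_nonneg hab fun t _ => sq_nonneg _
  rcases hab.eq_or_lt with rfl | hlt
  · simp [I]
  · rw [hexpand, mul_nonneg_iff_of_pos_left (sub_pos.2 hlt)] at hnonneg
    linarith

theorem sq_le_mul_integral_sq_deriv {g : ℝ → ℝ} (hg : ContDiff ℝ 1 g) {a b x : ℝ}
    (hga : g a = 0) (hx : x ∈ Set.Icc a b) :
    g x ^ 2 ≤ (b - a) * ∫ t in a..b, deriv g t ^ 2 := by
  have hg' : Continuous (deriv g) := hg.continuous_deriv le_rfl
  have hftc : g x = ∫ t in a..x, deriv g t := by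
    rw [integral_deriv_eq_sub (fun t _ => hg.differentiable one_ne_zero t)
      (hg'.intervalIntegrable _ _), hga, sub_zero]
  calc g x ^ 2 ≤ (x - a) * ∫ t in a..x, deriv g t ^ 2 := by
        rw [hftc]
        exact sq_integral_le_mul_integral_sq hx.1 (hg'.intervalIntegrable _ _)
          ((hg'.pow 2).intervalIntegrable _ _)
    _ ≤ (b - a) * ∫ t in a..b, deriv g t ^ 2 :=
        mul_le_mul (by linarith [hx.2])
          (integral_mono_interval le_rfl hx.1 hx.2
            (Filter.Eventually.of_forall fun t => sq_nonneg _) ((hg'.pow 2).intervalIntegrable _ _))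
          (integral_nonneg hx.1 fun t _ => sq_nonneg _) (by linarith [hx.1, hx.2])

theorem integral_sq_le_mul_integral_sq_deriv {g : ℝ → ℝ} (hg : ContDiff ℝ 1 g) {a b : ℝ}
    (hab : a ≤ b) (hga : g a = 0) :
    ∫ t in a..b, g t ^ 2 ≤ (b - a) ^ 2 * ∫ t in a..b, deriv g t ^ 2 := by
  calc ∫ t in a..b, g t ^ 2 ≤ ∫ _ in a..b, (b - a) * ∫ t in a..b, deriv g t ^ 2 :=
        integral_mono_on hab ((hg.continuous.pow 2).intervalIntegrable _ _) intervalIntegrable_const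
          fun x hx => sq_le_mul_integral_sq_deriv hg hga hx
    _ = (b - a) ^ 2 * ∫ t in a..b, deriv g t ^ 2 := by rw [integral_const, smul_eq_mul]; ring

theorem sq_le_integral_sq_deriv_deriv {u : ℝ → ℝ} (hu : ContDiff ℝ 2 u) (hu0 : u 0 = 0)
    (hu0' : deriv u 0 = 0) {x : ℝ} (hx : x ∈ Set.Icc (0:ℝ) 1) :
    u x ^ 2 ≤ ∫ t in (0:ℝ)..1, deriv (deriv u) t ^ 2 := by
  have hu' : ContDiff ℝ 1 (deriv u) := ((contDiff_succ_iff_deriv (n := 1)).mp hu).2.2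
  have hdu : ∫ t in (0:ℝ)..1, deriv u t ^ 2 ≤ ∫ t in (0:ℝ)..1, deriv (deriv u) t ^ 2 := by
    simpa using integral_sq_le_mul_integral_sq_deriv hu' zero_le_one hu0'
  simpa using (sq_le_mul_integral_sq_deriv (hu.of_le one_le_two) hu0 hx).trans (by simpa using hdu)

theorem abs_multiplier_integrand_le {α x : ℝ} (hα : α ∈ Set.Icc (0:ℝ) 1)
    (hx : x ∈ Set.Icc (0:ℝ) 1) (a b c d e : ℝ) :
    |a * (x * b - α * c) + d * ((1 - α) * b + x * e)|
      ≤ 3 / 2 * (a ^ 2 + d ^ 2) + (2 * b ^ 2 + c ^ 2 + e ^ 2) / 3 := by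
  obtain ⟨hα0, hα1⟩ := hα
  obtain ⟨hx0, hx1⟩ := hx
  have hp : (x * b - α * c) ^ 2 ≤ 2 * (b ^ 2 + c ^ 2) := by
    nlinarith [sq_nonneg (x * b + α * c), mul_le_one₀ hx1 hx0 hx1, mul_le_one₀ hα1 hα0 hα1,
      sq_nonneg b, sq_nonneg c]
  have hq : ((1 - α) * b + x * e) ^ 2 ≤ 2 * (b ^ 2 + e ^ 2) := by
    nlinarith [sq_nonneg ((1 - α) * b - x * e), mul_le_one₀ hx1 hx0 hx1,
      mul_le_one₀ (by linarith : 1 - α ≤ 1) (by linarith) (by linarith : 1 - α ≤ 1),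
      sq_nonneg b, sq_nonneg e]
  rw [abs_le]
  constructor
  · nlinarith [sq_nonneg (3 * a + (x * b - α * c)), sq_nonneg (3 * d + ((1 - α) * b + x * e))]
  · nlinarith [sq_nonneg (3 * a - (x * b - α * c)), sq_nonneg (3 * d - ((1 - α) * b + x * e))]

noncomputable def beamEnergy (u v : ℝ → ℝ) : ℝ :=
  (1/2) * (∫ x in (0:ℝ)..1, (v x) ^ 2)
    + (1/2) * (∫ x in (0:ℝ)..1, (deriv (deriv u) x) ^ 2)
    + (1/2) * (∫ x in (0:ℝ)..1, (deriv v x) ^ 2)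

noncomputable def beamMultiplier (α : ℝ) (u v : ℝ → ℝ) : ℝ :=
  ∫ x in (0:ℝ)..1,
    (v x * (x * deriv u x - α * u x) + deriv v x * ((1 - α) * deriv u x + x * deriv (deriv u) x))

theorem abs_beamMultiplier_le_three_mul_beamEnergy {α : ℝ} (hα : α ∈ Set.Icc (0:ℝ) 1)
    {u v : ℝ → ℝ} (hu : ContDiff ℝ 2 u) (hv : ContDiff ℝ 1 v) (hu0 : u 0 = 0)
    (hu0' : deriv u 0 = 0) :
    |beamMultiplier α u v| ≤ 3 * beamEnergy u v := by
  have hu' : ContDiff ℝ 1 (deriv u) := ((contDiff_succ_iff_deriv (n := 1)).mp hu).2.2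
  have hv₀ : Continuous v := hv.continuous
  have hv' : Continuous (deriv v) := hv.continuous_deriv le_rfl
  have hu'' : Continuous (deriv (deriv u)) := hu'.continuous_deriv le_rfl
  set U := ∫ x in (0:ℝ)..1, deriv (deriv u) x ^ 2
  have hU : 0 ≤ U := integral_nonneg zero_le_one fun _ _ => sq_nonneg _
  calc |beamMultiplier α u v|
      ≤ ∫ x in (0:ℝ)..1,
          (3 / 2 * v x ^ 2 + 3 / 2 * deriv v x ^ 2 + deriv (deriv u) x ^ 2 / 3 + U) := by
        rw [beamMultiplier, ← Real.norm_eq_abs]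
        apply norm_integral_le_of_norm_le zero_le_one
        · refine Filter.Eventually.of_forall fun x hx => ?_
          have hx' : x ∈ Set.Icc (0:ℝ) 1 := ⟨hx.1.le, hx.2⟩
          have hdu : deriv u x ^ 2 ≤ U := by simpa using sq_le_mul_integral_sq_deriv hu' hu0' hx'
          have := abs_multiplier_integrand_le hα hx' (v x) (deriv u x) (u x) (deriv v x)
            (deriv (deriv u) x)
          rw [Real.norm_eq_abs]
          linarith [sq_le_integral_sq_deriv_deriv hu hu0 hu0' hx']
        · exact Continuous.intervalIntegrable (by fun_prop) 0 1
    _ = 3 / 2 * (∫ x in (0:ℝ)..1, v x ^ 2) + 3 / 2 * (∫ x in (0:ℝ)..1, deriv v x ^ 2)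
          + U / 3 + U := by
        rw [integral_add, integral_add, integral_add, integral_const_mul, integral_const_mul,
          integral_div, integral_const, smul_eq_mul, sub_zero, one_mul]
        all_goals exact Continuous.intervalIntegrable (by fun_prop) 0 1
    _ ≤ 3 * beamEnergy u v := by
        rw [beamEnergy]
        linarith

theorem stmt_1 (α lam : ℝ) (hα : 1/2 < α ∧ α < 1) (hlam : 0 < lam ∧ lam < 1/3)
    (u v : ℝ → ℝ) (hu : ContDiff ℝ 2 u) (hv : ContDiff ℝ 1 v)
    (hu0 : u 0 = 0) (hu0' : deriv u 0 = 0)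
    (E ρ : ℝ)
    (hE : E = (1/2) * (∫ x in (0:ℝ)..1, (v x) ^ 2)
        + (1/2) * (∫ x in (0:ℝ)..1, (deriv (deriv u) x) ^ 2)
        + (1/2) * (∫ x in (0:ℝ)..1, (deriv v x) ^ 2))
    (hρ : ρ = ∫ x in (0:ℝ)..1,
        (v x * (x * deriv u x - α * u x)
          + deriv v x * ((1 - α) * deriv u x + x * deriv (deriv u) x))) :
    (1 - 3 * lam) * E ≤ E + lam * ρ ∧ E + lam * ρ ≤ (1 + 3 * lam) * E := by
  have hρE : |ρ| ≤ 3 * E := by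
    rw [hE, hρ]
    exact abs_beamMultiplier_le_three_mul_beamEnergy ⟨by linarith [hα.1], hα.2.le⟩
      hu hv hu0 hu0'
  obtain ⟨hρ_lower, hρ_upper⟩ := abs_le.mp hρE
  constructor <;> nlinarith [hlam.1]
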